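/- Let A_L ∈ ℝ^(m×m), P symmetric positive definite, γ > 0, and suppose P·A_L + A_Lᵀ·P + I + (1/γ²)·P·E·Eᵀ·P ≺ 0 for E ∈ ℝ^(m×n). Then for every ω ∈ ℝ, the matrix jωI − A_L is invertible and ‖(jωI − A_L)⁻¹ E d‖ < γ‖d‖ for every nonzero d ∈ ℂⁿ. -/

import Mathlib

/-!
If `(jωI - A) x = E d`, then `x* P x` is real and `jω` is imaginary, so the Hermitian form of the
LMI at `x` equals `2 Re⟨y, d⟩ - ‖x‖² - γ⁻² ‖y‖²` with `y = Eᴴ P x`. Positivity of that form and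
`2 Re⟨y, d⟩ ≤ γ⁻² ‖y‖² + γ² ‖d‖²` give `‖x‖ < γ ‖d‖` whenever `x ≠ 0`; taking `d = 0` shows that
`jωI - A` has trivial kernel. The real LMI holds over `ℂ` because a real positive definite form
evaluated at `a + ib` is the sum of its values at `a` and at `b`.
-/

open Matrix Complex
open scoped ComplexOrder

namespace Matrix

variable {𝕜 ι κ : Type*} [RCLike 𝕜] [Fintype ι] [Fintype κ]

theorem re_star_dotProduct_self_eq_norm_sq (v : ι → 𝕜) :
    RCLike.re (star v ⬝ᵥ v) = ‖WithLp.toLp 2 v‖ ^ 2 := by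
  rw [dotProduct_comm, ← EuclideanSpace.inner_toLp_toLp]
  exact inner_self_eq_norm_sq _

theorem re_star_dotProduct_le_norm_mul_norm (u v : ι → 𝕜) :
    RCLike.re (star u ⬝ᵥ v) ≤ ‖WithLp.toLp 2 u‖ * ‖WithLp.toLp 2 v‖ := by
  rw [dotProduct_comm, ← EuclideanSpace.inner_toLp_toLp]
  exact re_inner_le_norm _ _

theorem sqrt_sum_normSq_eq_norm (v : ι → ℂ) : √(∑ i, normSq (v i)) = ‖WithLp.toLp 2 v‖ := by
  simp [EuclideanSpace.norm_eq, normSq_eq_norm_sq]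

theorem star_dotProduct_conjTranspose_mulVec (B : Matrix κ ι 𝕜) (x : ι → 𝕜) (z : κ → 𝕜) :
    star x ⬝ᵥ Bᴴ *ᵥ z = star (B *ᵥ x) ⬝ᵥ z := by
  rw [dotProduct_mulVec, star_mulVec]

theorem IsHermitian.re_star_dotProduct_mul_add_conjTranspose_mul_mulVec {P : Matrix ι ι 𝕜}
    (hP : P.IsHermitian) (A : Matrix ι ι 𝕜) (x : ι → 𝕜) :
    RCLike.re (star x ⬝ᵥ (P * A + Aᴴ * P) *ᵥ x) = 2 * RCLike.re (star x ⬝ᵥ P *ᵥ (A *ᵥ x)) := by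
  have hconj : star x ⬝ᵥ (Aᴴ * P) *ᵥ x = star (star x ⬝ᵥ P *ᵥ (A *ᵥ x)) := by
    rw [← mulVec_mulVec, star_dotProduct_conjTranspose_mulVec, star_dotProduct, ← hP.eq,
      star_dotProduct_conjTranspose_mulVec, hP.eq]
  rw [add_mulVec, dotProduct_add, map_add, hconj, ← mulVec_mulVec, RCLike.star_def,
    RCLike.conj_re]
  ring

def BoundedRealLMI [DecidableEq ι] (γ : ℝ) (P A : Matrix ι ι 𝕜) (E : Matrix ι κ 𝕜) : Prop :=
  (-(P * A + Aᴴ * P + 1 + (γ ^ 2)⁻¹ • (P * E * Eᴴ * P))).PosDef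

theorem BoundedRealLMI.norm_lt_of_mulVec_eq [DecidableEq ι] {γ : ℝ} (hγ : 0 < γ)
    {P A : Matrix ι ι 𝕜} {E : Matrix ι κ 𝕜} (hLMI : BoundedRealLMI γ P A E)
    (hP : P.IsHermitian) {c : 𝕜} (hc : RCLike.re c = 0) {x : ι → 𝕜} {d : κ → 𝕜}
    (hx : (c • 1 - A) *ᵥ x = E *ᵥ d) (hx0 : x ≠ 0) :
    ‖WithLp.toLp 2 x‖ < γ * ‖WithLp.toLp 2 d‖ := by
  set y := (Eᴴ * P) *ᵥ x
  have hAx : A *ᵥ x = c • x - E *ᵥ d := by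
    rw [← hx, sub_mulVec, smul_mulVec, one_mulVec, sub_sub_cancel]
  have hPE : P * E = (Eᴴ * P)ᴴ := by rw [conjTranspose_mul, hP.eq, conjTranspose_conjTranspose]
  have hcross : RCLike.re (star x ⬝ᵥ (P * A) *ᵥ x) + RCLike.re (star x ⬝ᵥ (Aᴴ * P) *ᵥ x)
      = -2 * RCLike.re (star y ⬝ᵥ d) := by
    rw [← map_add, ← dotProduct_add, ← add_mulVec,
      hP.re_star_dotProduct_mul_add_conjTranspose_mul_mulVec, hAx, mulVec_sub, mulVec_smul,
      dotProduct_sub, dotProduct_smul, smul_eq_mul, map_sub, RCLike.mul_re, hc,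
      hP.im_star_dotProduct_mulVec_self, mulVec_mulVec, hPE, star_dotProduct_conjTranspose_mulVec]
    ring
  have hgain : RCLike.re (star x ⬝ᵥ (P * E * Eᴴ * P) *ᵥ x) = ‖WithLp.toLp 2 y‖ ^ 2 := by
    rw [Matrix.mul_assoc (P * E), hPE, ← mulVec_mulVec, star_dotProduct_conjTranspose_mulVec,
      re_star_dotProduct_self_eq_norm_sq]
  have hpos := (RCLike.pos_iff.1 (hLMI.dotProduct_mulVec_pos hx0)).1
  simp only [neg_mulVec, add_mulVec, smul_mulVec, one_mulVec, dotProduct_neg, dotProduct_add,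
    dotProduct_smul, map_neg, map_add, RCLike.smul_re, hgain,
    re_star_dotProduct_self_eq_norm_sq] at hpos
  have hyd := re_star_dotProduct_le_norm_mul_norm y d
  have hyoung : 2 * (‖WithLp.toLp 2 y‖ * ‖WithLp.toLp 2 d‖)
      ≤ (γ ^ 2)⁻¹ * ‖WithLp.toLp 2 y‖ ^ 2 + (γ * ‖WithLp.toLp 2 d‖) ^ 2 := by
    have := two_mul_le_add_sq (γ⁻¹ * ‖WithLp.toLp 2 y‖) (γ * ‖WithLp.toLp 2 d‖)
    field_simp at this ⊢
    linarith
  refine lt_of_pow_lt_pow_left₀ 2 (by positivity) ?_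
  linarith

theorem re_star_dotProduct_map_ofReal_mulVec (Q : Matrix ι ι ℝ) (x : ι → ℂ) :
    (star x ⬝ᵥ Q.map ofReal *ᵥ x).re
      = (fun i ↦ (x i).re) ⬝ᵥ Q *ᵥ (fun i ↦ (x i).re)
        + (fun i ↦ (x i).im) ⬝ᵥ Q *ᵥ (fun i ↦ (x i).im) := by
  simp only [dotProduct, mulVec, Finset.mul_sum, ← Finset.sum_add_distrib, re_sum, map_apply,
    Pi.star_apply, RCLike.star_def, mul_re, conj_re, conj_im, ofReal_re, ofReal_im, mul_im]
  refine Finset.sum_congr rfl fun i _ ↦ Finset.sum_congr rfl fun j _ ↦ ?_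
  ring

theorem PosDef.map_ofReal {Q : Matrix ι ι ℝ} (hQ : Q.PosDef) : (Q.map ofReal).PosDef := by
  have hherm : (Q.map ofReal).IsHermitian := hQ.isHermitian.map _ fun _ ↦ by simp
  refine .of_dotProduct_mulVec_pos hherm fun x hx ↦
    RCLike.pos_iff.2 ⟨?_, hherm.im_star_dotProduct_mulVec_self x⟩
  have hQ' (v : ι → ℝ) : 0 ≤ v ⬝ᵥ Q *ᵥ v ∧ (v ≠ 0 → 0 < v ⬝ᵥ Q *ᵥ v) :=
    ⟨by simpa using hQ.posSemidef.dotProduct_mulVec_nonneg v,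
      fun hv ↦ by simpa using hQ.dotProduct_mulVec_pos hv⟩
  have hre_or_im : (fun i ↦ (x i).re) ≠ 0 ∨ (fun i ↦ (x i).im) ≠ 0 := by
    by_contra! h
    exact hx (funext fun i ↦ Complex.ext (congrFun h.1 i) (congrFun h.2 i))
  rw [RCLike.re_to_complex, re_star_dotProduct_map_ofReal_mulVec]
  rcases hre_or_im with h | h
  · exact add_pos_of_pos_of_nonneg ((hQ' _).2 h) (hQ' _).1
  · exact add_pos_of_nonneg_of_pos (hQ' _).1 ((hQ' _).2 h)

theorem map_ofReal_mul {l m n : Type*} [Fintype m] (X : Matrix l m ℝ) (Y : Matrix m n ℝ) :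
    (X * Y).map ofReal = X.map ofReal * Y.map ofReal :=
  Matrix.map_mul (f := ofRealHom)

theorem map_ofReal_transpose {m n : Type*} (X : Matrix m n ℝ) :
    Xᵀ.map ofReal = (X.map ofReal)ᴴ := by
  ext
  simp

theorem BoundedRealLMI.map_ofReal [DecidableEq ι] {γ : ℝ} {P A : Matrix ι ι ℝ}
    {E : Matrix ι κ ℝ} (h : BoundedRealLMI γ P A E) :
    BoundedRealLMI γ (P.map ofReal) (A.map ofReal) (E.map ofReal) := by
  convert PosDef.map_ofReal h using 1
  simp [BoundedRealLMI, Matrix.map_add, Matrix.map_neg, map_ofReal_mul, map_ofReal_transpose,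
    Matrix.map_smul, Matrix.map_one]

end Matrix

/-- H∞ bound: if P ≻ 0 and PA_L + A_LᵀP + I + γ⁻²·P E Eᵀ P ≺ 0, then for every ω ∈ ℝ
the matrix jωI − A_L is invertible and ‖(jωI − A_L)⁻¹ E d‖ < γ‖d‖ for every nonzero d. -/
theorem hinf_bound (m n : ℕ) (γ : ℝ) (hγ : 0 < γ)
    (P AL : Matrix (Fin m) (Fin m) ℝ) (E : Matrix (Fin m) (Fin n) ℝ)
    (hP : P.PosDef)
    (hLMI : (-(P * AL + ALᵀ * P + 1 + (γ ^ 2)⁻¹ • (P * E * Eᵀ * P))).PosDef) :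
    ∀ ω : ℝ,
      IsUnit (((ω : ℂ) * Complex.I) • (1 : Matrix (Fin m) (Fin m) ℂ)
          - AL.map Complex.ofReal).det ∧
      ∀ d : Fin n → ℂ, d ≠ 0 →
        Real.sqrt (∑ i, Complex.normSq
            (((((ω : ℂ) * Complex.I) • (1 : Matrix (Fin m) (Fin m) ℂ)
              - AL.map Complex.ofReal)⁻¹).mulVec ((E.map Complex.ofReal).mulVec d) i))
          < γ * Real.sqrt (∑ i, Complex.normSq (d i)) := by
  intro ω
  have hLMIc : BoundedRealLMI γ (P.map ofReal) (AL.map ofReal) (E.map ofReal) :=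
    BoundedRealLMI.map_ofReal (by simpa [BoundedRealLMI] using hLMI)
  have hPc : (P.map ofReal).IsHermitian := hP.isHermitian.map _ fun _ ↦ by simp
  have hgain {x d} (hx : _ *ᵥ x = _ *ᵥ d) (hx0 : x ≠ 0) :=
    hLMIc.norm_lt_of_mulVec_eq hγ hPc (c := (ω : ℂ) * I) (by simp) hx hx0
  set M := ((ω : ℂ) * I) • (1 : Matrix (Fin m) (Fin m) ℂ) - AL.map ofReal
  have hdet : IsUnit M.det := by
    refine isUnit_iff_ne_zero.2 fun h0 ↦ ?_
    obtain ⟨v, hv0, hv⟩ := exists_mulVec_eq_zero_iff.2 h0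
    exact (norm_nonneg _).not_gt (by simpa using hgain (d := 0) (by rw [hv, mulVec_zero]) hv0)
  refine ⟨hdet, fun d hd ↦ ?_⟩
  have hMx : M *ᵥ (M⁻¹ *ᵥ (E.map ofReal *ᵥ d)) = E.map ofReal *ᵥ d := by
    rw [mulVec_mulVec, mul_nonsing_inv _ hdet, one_mulVec]
  simp only [sqrt_sum_normSq_eq_norm]
  rcases eq_or_ne (M⁻¹ *ᵥ (E.map ofReal *ᵥ d)) 0 with h0 | h0
  · rw [h0]
    simpa [hγ] using hd
  · exact hgain hMx h0
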